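/- Let F, G : 𝔻 → ℝ be harmonic functions on the open unit disc and p, q > 1 with 1/p + 1/q = 1. If ∫_𝔻 (1−|z|²)^{p−2} |∂F/∂z|^p dxdy < ∞ and ∫_𝔻 (1−|z|²)^{q−2} |∂G/∂z|^q dxdy < ∞, then the Jacobian of Φ = F + iG satisfies ∫_𝔻 |J(Φ)| dxdy < ∞. In fact |J(Φ)| = 2|∂G/∂z · conj(∂F/∂z) − ∂F/∂z · conj(∂G/∂z)| and the bound follows from Hölder's inequality (note (1−|z|²)^{(p−2)/p} · (1−|z|²)^{(q−2)/q} = 1). -/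

import Mathlib

/-!
Both `J(F + iG)` and `∂G/∂z · conj(∂F/∂z) - ∂F/∂z · conj(∂G/∂z)` are multiples (by `1` and
`-i/2`) of the real Jacobian determinant `F_x G_y - F_y G_x`, which gives the identity and
`|J| ≤ 4 |∂F/∂z| |∂G/∂z|`. With `w = 1 - |z|²` we have `(p-2)/p + (q-2)/q = 2 - 2 (1/p + 1/q) = 0`,
so `|∂F/∂z| |∂G/∂z| = (w^{(p-2)/p} |∂F/∂z|) (w^{(q-2)/q} |∂G/∂z|)` is the product of an `Lᵖ` and
an `L^q` function, and Hölder's inequality concludes.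
-/

open MeasureTheory AddCircle Complex Filter Topology ComplexConjugate ContinuousLinearMap

noncomputable section

namespace HH

/-- The open unit disc in `ℂ`. -/
def disc : Set ℂ := Metric.ball (0 : ℂ) 1

/-- The Wirtinger derivative `∂Φ/∂z = (Φ_x - iΦ_y)/2`. -/
def wirtZ (Φ : ℂ → ℂ) (z : ℂ) : ℂ :=
  (fderiv ℝ Φ z 1 - Complex.I * fderiv ℝ Φ z Complex.I) / 2

/-- The Wirtinger derivative `∂Φ/∂z̄ = (Φ_x + iΦ_y)/2`. -/
def wirtZbar (Φ : ℂ → ℂ) (z : ℂ) : ℂ :=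
  (fderiv ℝ Φ z 1 + Complex.I * fderiv ℝ Φ z Complex.I) / 2

/-- The Jacobian `J(Φ) = |∂Φ/∂z|² - |∂Φ/∂z̄|²`. -/
def jac (Φ : ℂ → ℂ) (z : ℂ) : ℝ := ‖wirtZ Φ z‖ ^ 2 - ‖wirtZbar Φ z‖ ^ 2

/-- The signed multiplicity function `m_Φ(w) = Σ_{z ∈ 𝔻, Φ(z) = w} sgn(J(Φ)(z))`. -/
def mult (Φ : ℂ → ℂ) (w : ℂ) : ℝ :=
  ∑' z : ↥(disc ∩ Φ ⁻¹' {w}), Real.sign (jac Φ (z : ℂ))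

/-- The Wirtinger derivative `∂F/∂z = (F_x - iF_y)/2` of a real-valued function. -/
def wirtR (F : ℂ → ℝ) (z : ℂ) : ℂ :=
  ((fderiv ℝ F z 1 : ℝ) - Complex.I * ((fderiv ℝ F z Complex.I : ℝ) : ℂ)) / 2

/-- `F` is harmonic on the open unit disc: it is `C²` there with vanishing Laplacian. -/
def HarmonicOnDisc (F : ℂ → ℝ) : Prop :=
  ContDiffOn ℝ 2 F disc ∧
    ∀ z ∈ disc,
      fderiv ℝ (fun w => fderiv ℝ F w 1) z 1 +
        fderiv ℝ (fun w => fderiv ℝ F w Complex.I) z Complex.I = 0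

lemma one_sub_norm_sq_pos_of_mem_disc {z : ℂ} (hz : z ∈ disc) : 0 < 1 - ‖z‖ ^ 2 := by
  have : ‖z‖ < 1 := mem_ball_zero_iff.1 hz
  nlinarith [norm_nonneg z]

lemma HarmonicOnDisc.differentiableAt {F : ℂ → ℝ} (hF : HarmonicOnDisc F) {z : ℂ}
    (hz : z ∈ disc) : DifferentiableAt ℝ F z :=
  (hF.1.differentiableOn two_ne_zero z hz).differentiableAt (Metric.isOpen_ball.mem_nhds hz)

lemma fderiv_ofReal_add_I_mul_apply {F G : ℂ → ℝ} {z : ℂ} (hF : DifferentiableAt ℝ F z)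
    (hG : DifferentiableAt ℝ G z) (v : ℂ) :
    fderiv ℝ (fun w => (F w : ℂ) + I * (G w : ℂ)) z v
      = (fderiv ℝ F z v : ℂ) + I * (fderiv ℝ G z v : ℂ) := by
  have hF' : HasFDerivAt (fun w => (F w : ℂ)) (ofRealCLM.comp (fderiv ℝ F z)) z :=
    ofRealCLM.hasFDerivAt.comp z hF.hasFDerivAt
  have hG' : HasFDerivAt (fun w => I * (G w : ℂ)) (I • ofRealCLM.comp (fderiv ℝ G z)) z :=
    (ofRealCLM.hasFDerivAt.comp z hG.hasFDerivAt).const_mul I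
  rw [(hF'.fun_add hG').fderiv]
  simp

lemma jac_ofReal_add_I_mul {F G : ℂ → ℝ} {z : ℂ} (hF : DifferentiableAt ℝ F z)
    (hG : DifferentiableAt ℝ G z) :
    jac (fun w => (F w : ℂ) + I * (G w : ℂ)) z
      = fderiv ℝ F z 1 * fderiv ℝ G z I - fderiv ℝ F z I * fderiv ℝ G z 1 := by
  set a := fderiv ℝ F z 1
  set b := fderiv ℝ F z I
  set c := fderiv ℝ G z 1
  set d := fderiv ℝ G z I
  have hz : ((a : ℂ) + I * c - I * ((b : ℂ) + I * d)) / 2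
      = (((a + d) / 2 : ℝ) : ℂ) + (((c - b) / 2 : ℝ) : ℂ) * I := by
    push_cast; linear_combination (-d / 2 : ℂ) * I_sq
  have hzbar : ((a : ℂ) + I * c + I * ((b : ℂ) + I * d)) / 2
      = (((a - d) / 2 : ℝ) : ℂ) + (((c + b) / 2 : ℝ) : ℂ) * I := by
    push_cast; linear_combination (d / 2 : ℂ) * I_sq
  rw [jac, wirtZ, wirtZbar, fderiv_ofReal_add_I_mul_apply hF hG,
    fderiv_ofReal_add_I_mul_apply hF hG, hz, hzbar, Complex.sq_norm, Complex.sq_norm,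
    normSq_add_mul_I, normSq_add_mul_I]
  ring

lemma wirtR_mul_conj_sub (F G : ℂ → ℝ) (z : ℂ) :
    wirtR G z * conj (wirtR F z) - wirtR F z * conj (wirtR G z)
      = (((fderiv ℝ F z I * fderiv ℝ G z 1 - fderiv ℝ F z 1 * fderiv ℝ G z I) / 2 : ℝ) : ℂ)
          * I := by
  simp only [wirtR, map_div₀, map_sub, map_mul, conj_ofReal, conj_I, map_ofNat]
  push_cast
  ring

lemma abs_jac_ofReal_add_I_mul {F G : ℂ → ℝ} {z : ℂ} (hF : DifferentiableAt ℝ F z)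
    (hG : DifferentiableAt ℝ G z) :
    |jac (fun w => (F w : ℂ) + I * (G w : ℂ)) z| =
      2 * ‖wirtR G z * conj (wirtR F z) - wirtR F z * conj (wirtR G z)‖ := by
  rw [jac_ofReal_add_I_mul hF hG, wirtR_mul_conj_sub, norm_mul, norm_I, norm_real,
    Real.norm_eq_abs, mul_one, abs_div, abs_two, abs_sub_comm]
  ring

lemma norm_mul_conj_sub_mul_conj_le (a b : ℂ) :
    ‖a * conj b - b * conj a‖ ≤ 2 * (‖a‖ * ‖b‖) := by
  calc ‖a * conj b - b * conj a‖ ≤ ‖a * conj b‖ + ‖b * conj a‖ := norm_sub_le _ _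
    _ = 2 * (‖a‖ * ‖b‖) := by simp only [norm_mul, RCLike.norm_conj]; ring

lemma measurable_wirtR (F : ℂ → ℝ) : Measurable (wirtR F) := by
  unfold wirtR
  fun_prop

lemma measurable_jac (Φ : ℂ → ℂ) : Measurable (jac Φ) := by
  unfold jac wirtZ wirtZbar
  fun_prop

section WeightedHolder

variable {α E F : Type*} [MeasurableSpace α] {μ : Measure α}
  [NormedAddCommGroup E] [NormedAddCommGroup F]

lemma memLp_rpow_mul_norm_of_integrable {w : α → ℝ} {f : α → E} {a p : ℝ} (hp : 0 < p)
    (hw : Measurable w) (hw_pos : ∀ᵐ x ∂μ, 0 < w x) (hf : AEStronglyMeasurable f μ)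
    (hint : Integrable (fun x => w x ^ a * ‖f x‖ ^ p) μ) :
    MemLp (fun x => w x ^ (a / p) * ‖f x‖) (ENNReal.ofReal p) μ := by
  have hmeas : AEStronglyMeasurable (fun x => w x ^ (a / p) * ‖f x‖) μ :=
    (hw.pow_const _).aestronglyMeasurable.mul hf.norm
  rw [← integrable_norm_rpow_iff hmeas (by simpa using hp) ENNReal.ofReal_ne_top,
    ENNReal.toReal_ofReal hp.le]
  refine hint.congr (hw_pos.mono fun x hx => ?_)
  change w x ^ a * ‖f x‖ ^ p = ‖w x ^ (a / p) * ‖f x‖‖ ^ p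
  rw [Real.norm_of_nonneg (by positivity), Real.mul_rpow (by positivity) (norm_nonneg _),
    ← Real.rpow_mul hx.le, div_mul_cancel₀ _ hp.ne']

/-- The weights `w^{(p-2)/p}` and `w^{(q-2)/q}` multiply to `1`, so this is Hölder's
inequality for `w^{(p-2)/p} ‖f‖ ∈ Lᵖ` and `w^{(q-2)/q} ‖g‖ ∈ L^q`. -/
theorem integrable_norm_mul_norm_of_weighted_rpow {w : α → ℝ} {f : α → E} {g : α → F} {p q : ℝ}
    (hpq : p.HolderConjugate q) (hw : Measurable w) (hw_pos : ∀ᵐ x ∂μ, 0 < w x)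
    (hf : AEStronglyMeasurable f μ) (hg : AEStronglyMeasurable g μ)
    (hfp : Integrable (fun x => w x ^ (p - 2) * ‖f x‖ ^ p) μ)
    (hgq : Integrable (fun x => w x ^ (q - 2) * ‖g x‖ ^ q) μ) :
    Integrable (fun x => ‖f x‖ * ‖g x‖) μ := by
  have := hpq.ennrealOfReal
  have hprod := (memLp_rpow_mul_norm_of_integrable hpq.pos hw hw_pos hf hfp).integrable_mul
    (memLp_rpow_mul_norm_of_integrable hpq.symm.pos hw hw_pos hg hgq)
  have hexp : (p - 2) / p + (q - 2) / q = 0 := by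
    rw [sub_div, sub_div, div_self hpq.ne_zero, div_self hpq.symm.ne_zero]
    linear_combination (-2) * hpq.inv_add_inv_eq_one
  refine hprod.congr (hw_pos.mono fun x hx => ?_)
  calc w x ^ ((p - 2) / p) * ‖f x‖ * (w x ^ ((q - 2) / q) * ‖g x‖)
      = w x ^ ((p - 2) / p + (q - 2) / q) * (‖f x‖ * ‖g x‖) := by
        rw [Real.rpow_add hx]; ring
    _ = ‖f x‖ * ‖g x‖ := by rw [hexp, Real.rpow_zero, one_mul]

end WeightedHolder

theorem statement15_general (F G : ℂ → ℝ) (hF : HarmonicOnDisc F) (hG : HarmonicOnDisc G)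
    (p q : ℝ) (hp : 1 < p) (hpq : 1 / p + 1 / q = 1)
    (hFp : IntegrableOn (fun z : ℂ => (1 - ‖z‖ ^ 2) ^ (p - 2) * ‖wirtR F z‖ ^ p) disc volume)
    (hGq : IntegrableOn (fun z : ℂ => (1 - ‖z‖ ^ 2) ^ (q - 2) * ‖wirtR G z‖ ^ q) disc volume) :
    (∀ z ∈ disc,
        |jac (fun w => (F w : ℂ) + Complex.I * (G w : ℂ)) z| =
          2 * ‖wirtR G z * conj (wirtR F z) - wirtR F z * conj (wirtR G z)‖) ∧
      IntegrableOn (fun z => |jac (fun w => (F w : ℂ) + Complex.I * (G w : ℂ)) z|)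
        disc volume := by
  have hjac : ∀ z ∈ disc,
      |jac (fun w => (F w : ℂ) + Complex.I * (G w : ℂ)) z| =
        2 * ‖wirtR G z * conj (wirtR F z) - wirtR F z * conj (wirtR G z)‖ := fun z hz =>
    abs_jac_ofReal_add_I_mul (hF.differentiableAt hz) (hG.differentiableAt hz)
  refine ⟨hjac, ?_⟩
  have hconj : p.HolderConjugate q := Real.holderConjugate_iff.2 ⟨hp, by simpa using hpq⟩
  have hFG : IntegrableOn (fun z => ‖wirtR F z‖ * ‖wirtR G z‖) disc volume :=
    integrable_norm_mul_norm_of_weighted_rpow hconj (by fun_prop)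
      (ae_restrict_of_forall_mem measurableSet_ball fun z hz => one_sub_norm_sq_pos_of_mem_disc hz)
      (measurable_wirtR F).aestronglyMeasurable (measurable_wirtR G).aestronglyMeasurable hFp hGq
  refine (hFG.const_mul 4).mono' (measurable_jac _).abs.aestronglyMeasurable
    (ae_restrict_of_forall_mem measurableSet_ball fun z hz => ?_)
  rw [Real.norm_eq_abs, abs_abs, hjac z hz]
  linarith [norm_mul_conj_sub_mul_conj_le (wirtR G z) (wirtR F z)]

/-- If `F, G` are harmonic on `𝔻`, `1/p + 1/q = 1` with `p, q > 1`, and the Besov-type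
integrals of `∂F/∂z` and `∂G/∂z` are finite, then `∫_𝔻 |J(F + iG)| < ∞`; moreover
`|J(Φ)| = 2|∂G/∂z ⋅ conj(∂F/∂z) - ∂F/∂z ⋅ conj(∂G/∂z)|` on `𝔻`. -/
theorem statement15 (F G : ℂ → ℝ) (hF : HarmonicOnDisc F) (hG : HarmonicOnDisc G)
    (p q : ℝ) (hp : 1 < p) (hq : 1 < q) (hpq : 1 / p + 1 / q = 1)
    (hFp : IntegrableOn (fun z : ℂ => (1 - ‖z‖ ^ 2) ^ (p - 2) * ‖wirtR F z‖ ^ p) disc volume)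
    (hGq : IntegrableOn (fun z : ℂ => (1 - ‖z‖ ^ 2) ^ (q - 2) * ‖wirtR G z‖ ^ q) disc volume) :
    (∀ z ∈ disc,
        |jac (fun w => (F w : ℂ) + Complex.I * (G w : ℂ)) z| =
          2 * ‖wirtR G z * conj (wirtR F z) - wirtR F z * conj (wirtR G z)‖) ∧
      IntegrableOn (fun z => |jac (fun w => (F w : ℂ) + Complex.I * (G w : ℂ)) z|)
        disc volume :=
  statement15_general F G hF hG p q hp hpq hFp hGq

end HH
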